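/- Let a, b ∈ ℝ with -1 < a < 0 and b < 0, and let z₀ := W₀(-e/a). Then z₀ > 0, the point x₀ := b·(1 - z₀) lies in (0, b·ln|a|), it is the unique critical point of f(x) = (1 + a·exp(-x/b))·x on (0, b·ln|a|), and f''(x₀) < 0, so x₀ is a local maximum of f. -/

import Mathlib

open Real Set

/-!
With `g z = z * exp z`, the derivative of `f` is `1 + (a / e) * g (1 - x / b)`. Since `g` is
strictly increasing on `[-1, ∞)`, the only critical point with `1 - x / b ≥ -1` is the one with
`1 - x / b = z₀`, i.e. `x = x₀`; comparing `g z₀ = -e / a` with `g 1 = e` and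
`g (1 - log |a|) = -(1 - log |a|) e / a` places `z₀` in `(1, 1 - log |a|)`, hence `x₀` in
`(0, b log |a|)`. Differentiating once more gives `f'' x₀ = (a / e) (1 + z₀) exp z₀ (-1 / b) < 0`,
and the second-derivative test concludes.
-/

lemma hasDerivAt_mul_exp (z : ℝ) : HasDerivAt (fun z : ℝ => z * exp z) ((1 + z) * exp z) z :=
  ((hasDerivAt_id' z).mul (hasDerivAt_exp z)).congr_deriv (by ring)

lemma strictMonoOn_mul_exp : StrictMonoOn (fun z : ℝ => z * exp z) (Ici (-1)) := by
  refine strictMonoOn_of_deriv_pos (convex_Ici _) (by fun_prop) fun z hz => ?_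
  rw [interior_Ici, mem_Ioi] at hz
  rw [(hasDerivAt_mul_exp z).deriv]
  exact mul_pos (by linarith) (exp_pos z)

lemma mem_Ioo_one_one_sub_log_of_mul_exp_eq {a z : ℝ} (ha1 : -1 < a) (ha2 : a < 0)
    (hz : -1 ≤ z) (h : z * exp z = -exp 1 / a) : z ∈ Ioo 1 (1 - log |a|) := by
  have hlog : log |a| < 0 := log_neg (abs_pos.2 ha2.ne) (by rw [abs_of_neg ha2]; linarith)
  have hexp : exp (1 - log |a|) = -exp 1 / a := by
    rw [exp_sub, exp_log (abs_pos.2 ha2.ne), abs_of_neg ha2, div_neg, neg_div]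
  constructor
  · refine (strictMonoOn_mul_exp.lt_iff_lt (by norm_num : (1 : ℝ) ∈ Ici (-1)) hz).1 ?_
    simp only [one_mul, h]
    rw [lt_div_iff_of_neg ha2]
    nlinarith [exp_pos 1]
  · have hmem : 1 - log |a| ∈ Ici (-1 : ℝ) := by rw [mem_Ici]; linarith
    refine (strictMonoOn_mul_exp.lt_iff_lt hz hmem).1 ?_
    simp only [h, hexp]
    have : 0 < -exp 1 / a := div_pos_of_neg_of_neg (by linarith [exp_pos 1]) ha2
    nlinarith

lemma hasDerivAt_one_add_mul_exp_neg_div_mul (a : ℝ) {b : ℝ} (hb : b ≠ 0) (x : ℝ) :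
    HasDerivAt (fun x => (1 + a * exp (-x / b)) * x)
      (1 + a / exp 1 * ((1 - x / b) * exp (1 - x / b))) x := by
  have hexp : HasDerivAt (fun x => exp (-x / b)) (exp (-x / b) * (-1 / b)) x :=
    ((hasDerivAt_neg' x).div_const b).exp
  refine (((hexp.const_mul a).const_add 1).mul (hasDerivAt_id' x)).congr_deriv ?_
  rw [sub_eq_add_neg, exp_add, neg_div]
  field_simp
  ring

lemma hasDerivAt_one_add_mul_mul_exp_one_sub_div (a b x : ℝ) :
    HasDerivAt (fun x => 1 + a / exp 1 * ((1 - x / b) * exp (1 - x / b)))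
      (a / exp 1 * ((1 + (1 - x / b)) * exp (1 - x / b) * (-1 / b))) x := by
  have haff : HasDerivAt (fun x => 1 - x / b) (-1 / b) x :=
    (((hasDerivAt_id' x).div_const b).const_sub 1).congr_deriv (by ring)
  exact (((hasDerivAt_mul_exp _).comp x haff).const_mul _).const_add 1

lemma one_add_div_exp_mul_mul_exp_eq_zero_iff {a b z₀ x : ℝ} (ha : a ≠ 0) (hb : b ≠ 0)
    (hz₀ : -1 ≤ z₀) (hz₀_eq : z₀ * exp z₀ = -exp 1 / a) (hx : -1 ≤ 1 - x / b) :
    1 + a / exp 1 * ((1 - x / b) * exp (1 - x / b)) = 0 ↔ x = b * (1 - z₀) := by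
  calc 1 + a / exp 1 * ((1 - x / b) * exp (1 - x / b)) = 0
      ↔ (1 - x / b) * exp (1 - x / b) = z₀ * exp z₀ := by
        rw [hz₀_eq, eq_div_iff ha]
        constructor <;> intro h <;> field_simp at h ⊢ <;> linarith
    _ ↔ 1 - x / b = z₀ := strictMonoOn_mul_exp.injOn.eq_iff hx hz₀
    _ ↔ x = b * (1 - z₀) := by
        constructor <;> intro h <;> field_simp at h ⊢ <;> linarith

theorem stmt_14 (a b : ℝ) (ha1 : -1 < a) (ha2 : a < 0) (hb : b < 0)
    (f : ℝ → ℝ) (hf : f = fun x : ℝ => (1 + a * Real.exp (-x / b)) * x)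
    (z0 : ℝ) (hz0 : -1 ≤ z0 ∧ z0 * Real.exp z0 = -(Real.exp 1) / a)
    (x0 : ℝ) (hx0 : x0 = b * (1 - z0)) :
    0 < z0 ∧ x0 ∈ Set.Ioo 0 (b * Real.log |a|) ∧
    (∀ x ∈ Set.Ioo 0 (b * Real.log |a|), deriv f x = 0 ↔ x = x0) ∧
    deriv (deriv f) x0 < 0 ∧ IsLocalMax f x0 := by
  obtain ⟨hz0_ge, hz0_eq⟩ := hz0
  obtain ⟨hz0_gt, hz0_lt⟩ := mem_Ioo_one_one_sub_log_of_mul_exp_eq ha1 ha2 hz0_ge hz0_eq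
  have hderiv : deriv f = fun x => 1 + a / exp 1 * ((1 - x / b) * exp (1 - x / b)) :=
    hf ▸ funext fun x => (hasDerivAt_one_add_mul_exp_neg_div_mul a hb.ne x).deriv
  have hx0z : 1 - x0 / b = z0 := by rw [hx0, mul_div_cancel_left₀ _ hb.ne]; ring
  have hcrit : ∀ x, 0 ≤ x → (deriv f x = 0 ↔ x = x0) := fun x hx => by
    rw [hderiv, hx0]
    refine one_add_div_exp_mul_mul_exp_eq_zero_iff ha2.ne hb.ne hz0_ge hz0_eq ?_
    linarith [div_nonpos_of_nonneg_of_nonpos hx hb.le]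
  have hx0_mem : x0 ∈ Ioo 0 (b * log |a|) := by
    rw [hx0]
    constructor <;> nlinarith
  have hsecond : deriv (deriv f) x0 < 0 := by
    rw [hderiv, (hasDerivAt_one_add_mul_mul_exp_one_sub_div a b x0).deriv, hx0z]
    refine mul_neg_of_neg_of_pos (div_neg_of_neg_of_pos ha2 (exp_pos 1)) ?_
    exact mul_pos (mul_pos (by linarith) (exp_pos z0)) (div_pos_of_neg_of_neg (by norm_num) hb)
  refine ⟨by linarith, hx0_mem, fun x hx => hcrit x hx.1.le, hsecond, ?_⟩
  exact isLocalMax_of_deriv_deriv_neg hsecond ((hcrit x0 hx0_mem.1.le).2 rfl) (hf ▸ by fun_prop)
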